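/- arXiv:2509.20083 — 2 statements merged into one kernel-verified Lean document; each statement's English description precedes it below -/
import Mathlib

section
/- Under the partially linear logistic model with 0 < P(X=1|Z) < 1 almost surely, β = 0 if and only if E[Cov(Y, X | Z)] = 0. -/
/-!
As `X` is `{0,1}`-valued, the model reads `E[Y | X, Z] = r + (q - r) X` with
`q = expit (β + g Z)` and `r = expit (g Z)`, both functions of `Z`. Conditioning down to `Z`
(tower property and pulling out `Z`-measurable factors, using `X² = X`) gives
`E[YX | Z] = q p` and `E[Y | Z] = r + (q - r) p` for `p = E[X | Z]`, so
`Cov(Y, X | Z) = p (1 - p) (q - r)`. Since `0 < p < 1` a.s. and `expit` is strictly increasing,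
this integrand has almost surely the strict sign of `β`.
-/

open MeasureTheory ProbabilityTheory

noncomputable def expit (t : ℝ) : ℝ := 1 / (1 + Real.exp (-t))

lemma expit_eq_sigmoid : expit = Real.sigmoid := funext fun _ => one_div _

lemma apply_mul_add_of_eq_zero_or_eq_one (φ : ℝ → ℝ) {x : ℝ} (hx : x = 0 ∨ x = 1) (β c : ℝ) :
    φ (x * β + c) = φ c + (φ (β + c) - φ c) * x := by
  rcases hx with rfl | rfl <;> simp

lemma norm_le_one_of_eq_zero_or_eq_one {x : ℝ} (hx : x = 0 ∨ x = 1) : ‖x‖ ≤ 1 := by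
  rcases hx with rfl | rfl <;> simp

lemma integrable_of_eq_zero_or_eq_one {Ω : Type*} {mΩ : MeasurableSpace Ω} {μ : Measure Ω}
    [IsFiniteMeasure μ] {f : Ω → ℝ} (hf : AEStronglyMeasurable f μ)
    (hf01 : ∀ ω, f ω = 0 ∨ f ω = 1) : Integrable f μ :=
  .of_bound hf 1 (ae_of_all _ fun ω => norm_le_one_of_eq_zero_or_eq_one (hf01 ω))

section Integral

variable {Ω : Type*} {mΩ : MeasurableSpace Ω} {μ : Measure Ω} [NeZero μ]

lemma integral_pos_of_ae_pos {f : Ω → ℝ} (hfi : Integrable f μ) (hf : ∀ᵐ ω ∂μ, 0 < f ω) :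
    0 < ∫ ω, f ω ∂μ := by
  refine (integral_nonneg_of_ae (hf.mono fun _ h => h.le)).lt_of_ne' fun h0 => ?_
  have hzero := (integral_eq_zero_iff_of_nonneg_ae (hf.mono fun _ h => h.le) hfi).mp h0
  obtain ⟨ω, hω0, hωpos⟩ := (hzero.and hf).exists
  exact hωpos.ne' hω0

lemma integral_mul_sub_eq_zero_iff {φ : ℝ → ℝ} (hφ : StrictMono φ) {w a : Ω → ℝ} {β : ℝ}
    (hw : ∀ᵐ ω ∂μ, 0 < w ω) (hi : Integrable (fun ω => w ω * (φ (β + a ω) - φ (a ω))) μ) :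
    ∫ ω, w ω * (φ (β + a ω) - φ (a ω)) ∂μ = 0 ↔ β = 0 := by
  refine ⟨fun h => ?_, fun h => by simp [h]⟩
  rcases lt_trichotomy β 0 with hβ | hβ | hβ
  · have hneg : 0 < ∫ ω, -(w ω * (φ (β + a ω) - φ (a ω))) ∂μ :=
      integral_pos_of_ae_pos hi.neg <| hw.mono fun ω hwω => by
        have := hφ (by linarith : β + a ω < a ω)
        nlinarith
    simp [integral_neg, h] at hneg
  · exact hβ
  · have hpos : 0 < ∫ ω, w ω * (φ (β + a ω) - φ (a ω)) ∂μ :=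
      integral_pos_of_ae_pos hi <| hw.mono fun ω hwω => by
        have := hφ (by linarith : a ω < β + a ω)
        nlinarith
    exact absurd h hpos.ne'

end Integral

section CondExp

variable {Ω : Type*} {m m₂ mΩ : MeasurableSpace Ω} {μ : Measure Ω} [IsFiniteMeasure μ]
  {X Y q r : Ω → ℝ}

lemma condExp_mul_eq_of_condExp_eq_affine (hm : m ≤ m₂) (hm₂ : m₂ ≤ mΩ)
    (hX : StronglyMeasurable[m₂] X) (hX01 : ∀ ω, X ω = 0 ∨ X ω = 1)
    (hq : StronglyMeasurable[m] q) (hqi : Integrable q μ) (hYi : Integrable Y μ)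
    (hY : μ[Y | m₂] =ᵐ[μ] r + (q - r) * X) :
    μ[Y * X | m] =ᵐ[μ] q * μ[X | m] := by
  have hXbdd : ∀ᵐ ω ∂μ, ‖X ω‖ ≤ 1 := ae_of_all _ fun ω => norm_le_one_of_eq_zero_or_eq_one (hX01 ω)
  have hXi : Integrable X μ :=
    integrable_of_eq_zero_or_eq_one (hX.mono hm₂).aestronglyMeasurable hX01
  have hYXi : Integrable (Y * X) μ := hYi.mul_bdd (hX.mono hm₂).aestronglyMeasurable hXbdd
  have hqXi : Integrable (q * X) μ := hqi.mul_bdd (hX.mono hm₂).aestronglyMeasurable hXbdd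
  calc μ[Y * X | m]
      =ᵐ[μ] μ[μ[Y * X | m₂] | m] := (condExp_condExp_of_le hm hm₂).symm
    _ =ᵐ[μ] μ[q * X | m] := by
        refine condExp_congr_ae ?_
        filter_upwards [condExp_mul_of_stronglyMeasurable_right hX hYXi hYi, hY] with ω h1 h2
        rcases hX01 ω with h | h <;> simp [h1, h2, h]
    _ =ᵐ[μ] q * μ[X | m] := condExp_mul_of_stronglyMeasurable_left hq hqXi hXi

lemma condExp_eq_of_condExp_eq_affine (hm : m ≤ m₂) (hm₂ : m₂ ≤ mΩ)
    (hX : StronglyMeasurable[m₂] X) (hX01 : ∀ ω, X ω = 0 ∨ X ω = 1)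
    (hq : StronglyMeasurable[m] q) (hr : StronglyMeasurable[m] r)
    (hqi : Integrable q μ) (hri : Integrable r μ)
    (hY : μ[Y | m₂] =ᵐ[μ] r + (q - r) * X) :
    μ[Y | m] =ᵐ[μ] r + (q - r) * μ[X | m] := by
  have hXbdd : ∀ᵐ ω ∂μ, ‖X ω‖ ≤ 1 := ae_of_all _ fun ω => norm_le_one_of_eq_zero_or_eq_one (hX01 ω)
  have hXi : Integrable X μ :=
    integrable_of_eq_zero_or_eq_one (hX.mono hm₂).aestronglyMeasurable hX01
  have hqrXi : Integrable ((q - r) * X) μ :=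
    (hqi.sub hri).mul_bdd (hX.mono hm₂).aestronglyMeasurable hXbdd
  calc μ[Y | m]
      =ᵐ[μ] μ[μ[Y | m₂] | m] := (condExp_condExp_of_le hm hm₂).symm
    _ =ᵐ[μ] μ[r + (q - r) * X | m] := condExp_congr_ae hY
    _ =ᵐ[μ] μ[r | m] + μ[(q - r) * X | m] := condExp_add hri hqrXi m
    _ =ᵐ[μ] r + (q - r) * μ[X | m] := by
        rw [condExp_of_stronglyMeasurable (hm.trans hm₂) hr hri]
        exact (condExp_mul_of_stronglyMeasurable_left (hq.sub hr) hqrXi hXi).add_left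

lemma condExp_mul_sub_mul_eq_of_condExp_eq_affine (hm : m ≤ m₂) (hm₂ : m₂ ≤ mΩ)
    (hX : StronglyMeasurable[m₂] X) (hX01 : ∀ ω, X ω = 0 ∨ X ω = 1)
    (hq : StronglyMeasurable[m] q) (hr : StronglyMeasurable[m] r)
    (hqi : Integrable q μ) (hri : Integrable r μ) (hYi : Integrable Y μ)
    (hY : μ[Y | m₂] =ᵐ[μ] r + (q - r) * X) :
    μ[Y * X | m] - μ[Y | m] * μ[X | m] =ᵐ[μ] μ[X | m] * (1 - μ[X | m]) * (q - r) := by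
  filter_upwards [condExp_mul_eq_of_condExp_eq_affine hm hm₂ hX hX01 hq hqi hYi hY,
    condExp_eq_of_condExp_eq_affine hm hm₂ hX hX01 hq hr hqi hri hY] with ω hYX hY
  simp only [Pi.sub_apply, Pi.mul_apply, Pi.add_apply, Pi.one_apply, hYX, hY]
  ring

end CondExp

lemma integrable_sigmoid_comp {Ω : Type*} {mΩ : MeasurableSpace Ω} {μ : Measure Ω}
    [IsFiniteMeasure μ] {f : Ω → ℝ} (hf : Measurable f) :
    Integrable (fun ω => Real.sigmoid (f ω)) μ :=
  .of_bound (continuous_sigmoid.measurable.comp hf).aestronglyMeasurable 1 <|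
    ae_of_all _ fun ω => by
      rw [Real.norm_of_nonneg (Real.sigmoid_nonneg _)]; exact Real.sigmoid_le_one _

/-- Under the partially linear logistic model
P(Y=1|X,Z) = expit(Xβ + g(Z)) with 0 < P(X=1|Z) < 1 a.s.,
β = 0 ↔ E[Cov(Y, X | Z)] = 0. -/
theorem stmt3
    {Ω : Type*} {mΩ : MeasurableSpace Ω} {μ : Measure Ω} [IsProbabilityMeasure μ]
    {d : ℕ} (Z : Ω → (Fin d → ℝ)) (hZ : Measurable Z)
    (Y X : Ω → ℝ) (hYmeas : Measurable Y) (hXmeas : Measurable X)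
    (hY01 : ∀ ω, Y ω = 0 ∨ Y ω = 1) (hX01 : ∀ ω, X ω = 0 ∨ X ω = 1)
    (g : (Fin d → ℝ) → ℝ) (hg : Measurable g) (β : ℝ)
    (hmodel : μ[Y | MeasurableSpace.comap (fun ω => (X ω, Z ω)) inferInstance]
      =ᵐ[μ] fun ω => expit (X ω * β + g (Z ω)))
    (hpos : ∀ᵐ ω ∂μ, 0 < (μ[X | MeasurableSpace.comap Z inferInstance]) ω
      ∧ (μ[X | MeasurableSpace.comap Z inferInstance]) ω < 1) :
    β = 0 ↔
      ∫ ω, ((μ[fun ω' => Y ω' * X ω' | MeasurableSpace.comap Z inferInstance]) ω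
        - (μ[Y | MeasurableSpace.comap Z inferInstance]) ω
          * (μ[X | MeasurableSpace.comap Z inferInstance]) ω) ∂μ = 0 := by
  set m : MeasurableSpace Ω := MeasurableSpace.comap Z inferInstance
  set m₂ : MeasurableSpace Ω := MeasurableSpace.comap (fun ω => (X ω, Z ω)) inferInstance
  have hpair : Measurable[m₂] fun ω => (X ω, Z ω) := comap_measurable _
  have hm : m ≤ m₂ := (measurable_snd.comp hpair).comap_le
  have hm₂ : m₂ ≤ mΩ := (hXmeas.prodMk hZ).comap_le
  have hgZ : Measurable[m] fun ω => g (Z ω) := hg.comp (comap_measurable Z)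
  set q : Ω → ℝ := fun ω => Real.sigmoid (β + g (Z ω))
  set r : Ω → ℝ := fun ω => Real.sigmoid (g (Z ω))
  have hq : Measurable[m] q := continuous_sigmoid.measurable.comp (hgZ.const_add β)
  have hr : Measurable[m] r := continuous_sigmoid.measurable.comp hgZ
  have hY : μ[Y | m₂] =ᵐ[μ] r + (q - r) * X := hmodel.trans <| ae_of_all _ fun ω => by
    simp [q, r, expit_eq_sigmoid, apply_mul_add_of_eq_zero_or_eq_one Real.sigmoid (hX01 ω)]
  have hqi : Integrable q μ := integrable_sigmoid_comp ((hg.comp hZ).const_add β)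
  have hri : Integrable r μ := integrable_sigmoid_comp (hg.comp hZ)
  have hYi : Integrable Y μ := integrable_of_eq_zero_or_eq_one hYmeas.aestronglyMeasurable hY01
  have hX : StronglyMeasurable[m₂] X := (measurable_fst.comp hpair).stronglyMeasurable
  have hcov := condExp_mul_sub_mul_eq_of_condExp_eq_affine hm hm₂ hX hX01
    hq.stronglyMeasurable hr.stronglyMeasurable hqi hri hYi hY
  set p := μ[X | m]
  have hp : StronglyMeasurable[mΩ] p := stronglyMeasurable_condExp.mono (hm.trans hm₂)
  have hw : ∀ᵐ ω ∂μ, 0 < p ω * (1 - p ω) := hpos.mono fun ω h => mul_pos h.1 (sub_pos.2 h.2)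
  have hi : Integrable (fun ω => p ω * (1 - p ω) * (q ω - r ω)) μ :=
    (hqi.sub hri).bdd_mul (c := 1)
      (hp.mul (stronglyMeasurable_const.sub hp)).aestronglyMeasurable <| hpos.mono fun ω h => by
        rw [Real.norm_of_nonneg (mul_pos h.1 (sub_pos.2 h.2)).le]
        nlinarith
  convert (integral_mul_sub_eq_zero_iff (a := fun ω => g (Z ω)) Real.sigmoid_strictMono hw hi).symm
    using 2
  exact integral_congr_ae hcov
end

section
/- For any measurable functions ĥ, f̂ of Z, the bias decomposition E[(Y - ĥ(Z))(X - f̂(Z))] - E[Cov(Y, X | Z)] = E[(E[Y|Z] - ĥ(Z))(E[X|Z] - f̂(Z))] holds; in particular the bias is bounded by the product of the L2 errors: |bias| ≤ ‖E[Y|Z] - ĥ(Z)‖_2 · ‖E[X|Z] - f̂(Z)‖_2. -/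
/-!
Since `Y - E[Y|Z]` is orthogonal in `L²` to every square-integrable `Z`-measurable function,
expanding `(Y - ĥ)(X - f̂)` along `Y - ĥ = (Y - E[Y|Z]) + (E[Y|Z] - ĥ)` and the same splitting
of `X - f̂` kills both cross terms, leaving the conditional covariance and the product of the
two regression errors. The bound is then Cauchy–Schwarz in `L²`.
-/

open MeasureTheory

namespace MeasureTheory

variable {Ω : Type*} {m mΩ : MeasurableSpace Ω} {μ : Measure Ω}

theorem abs_integral_mul_le_sqrt_integral_sq_mul {f g : Ω → ℝ} (hf : MemLp f 2 μ)
    (hg : MemLp g 2 μ) :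
    |∫ ω, f ω * g ω ∂μ| ≤ √(∫ ω, f ω ^ 2 ∂μ) * √(∫ ω, g ω ^ 2 ∂μ) := by
  have holder := integral_mul_norm_le_Lp_mul_Lq Real.HolderConjugate.two_two
    (by simpa using hf) (by simpa using hg)
  simp only [Real.norm_eq_abs, Real.rpow_two, sq_abs, ← Real.sqrt_eq_rpow, ← abs_mul] at holder
  exact abs_integral_le_integral_abs.trans holder

theorem integral_mul_sub_condExp_eq_zero [IsFiniteMeasure μ] (hm : m ≤ mΩ) {f v : Ω → ℝ}
    (hf : MemLp f 2 μ) (hvm : StronglyMeasurable[m] v) (hv : MemLp v 2 μ) :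
    ∫ ω, v ω * (f ω - μ[f|m] ω) ∂μ = 0 := by
  have hvf : Integrable (fun ω => v ω * f ω) μ := hv.integrable_mul hf
  have hvf' : Integrable (fun ω => v ω * μ[f|m] ω) μ := hv.integrable_mul (hf.condExp one_le_two)
  have pull_out : ∫ ω, v ω * μ[f|m] ω ∂μ = ∫ ω, v ω * f ω ∂μ := calc
    _ = ∫ ω, μ[v * f|m] ω ∂μ :=
      integral_congr_ae (condExp_mul_of_stronglyMeasurable_left hvm hvf
        (hf.integrable one_le_two)).symm
    _ = _ := integral_condExp hm
  simp_rw [mul_sub]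
  rw [integral_sub hvf hvf', pull_out, sub_self]

theorem integral_sub_mul_sub_eq_integral_condExp_add [IsFiniteMeasure μ] (hm : m ≤ mΩ)
    {Y X u v : Ω → ℝ} (hY : MemLp Y 2 μ) (hX : MemLp X 2 μ)
    (hum : StronglyMeasurable[m] u) (hvm : StronglyMeasurable[m] v)
    (hu : MemLp u 2 μ) (hv : MemLp v 2 μ) :
    ∫ ω, (Y ω - u ω) * (X ω - v ω) ∂μ
      = ∫ ω, (Y ω - μ[Y|m] ω) * (X ω - μ[X|m] ω) ∂μ
        + ∫ ω, (μ[Y|m] ω - u ω) * (μ[X|m] ω - v ω) ∂μ := by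
  set g := μ[Y|m]
  set k := μ[X|m]
  have hY_err : MemLp (Y - g) 2 μ := hY.sub (hY.condExp one_le_two)
  have hX_err : MemLp (X - k) 2 μ := hX.sub (hX.condExp one_le_two)
  have hY_bias : MemLp (g - u) 2 μ := (hY.condExp one_le_two).sub hu
  have hX_bias : MemLp (k - v) 2 μ := (hX.condExp one_le_two).sub hv
  have cross_Y : ∫ ω, (k ω - v ω) * (Y ω - g ω) ∂μ = 0 :=
    integral_mul_sub_condExp_eq_zero hm hY (stronglyMeasurable_condExp.sub hvm) hX_bias
  have cross_X : ∫ ω, (g ω - u ω) * (X ω - k ω) ∂μ = 0 :=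
    integral_mul_sub_condExp_eq_zero hm hX (stronglyMeasurable_condExp.sub hum) hY_bias
  have expand : ∀ ω, (Y ω - u ω) * (X ω - v ω)
      = (Y ω - g ω) * (X ω - k ω) + (k ω - v ω) * (Y ω - g ω)
        + (g ω - u ω) * (X ω - k ω) + (g ω - u ω) * (k ω - v ω) := fun ω => by ring
  have i₁ : Integrable (fun ω => (Y ω - g ω) * (X ω - k ω)) μ := hY_err.integrable_mul hX_err
  have i₂ : Integrable (fun ω => (k ω - v ω) * (Y ω - g ω)) μ := hX_bias.integrable_mul hY_err
  have i₃ : Integrable (fun ω => (g ω - u ω) * (X ω - k ω)) μ := hY_bias.integrable_mul hX_err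
  have i₄ : Integrable (fun ω => (g ω - u ω) * (k ω - v ω)) μ := hY_bias.integrable_mul hX_bias
  simp_rw [expand]
  rw [integral_add ?_ i₄, integral_add ?_ i₃, integral_add i₁ i₂, cross_Y, cross_X, add_zero,
    add_zero]
  · exact i₁.add i₂
  · exact (i₁.add i₂).add i₃

end MeasureTheory

/-- Bias decomposition
E[(Y-ĥ)(X-f̂)] - E[Cov(Y,X|Z)] = E[(E[Y|Z]-ĥ)(E[X|Z]-f̂)], and the bias is
bounded by the product of the L2 errors (Cauchy–Schwarz). -/
theorem stmt14
    {Ω : Type*} {mΩ : MeasurableSpace Ω} {μ : Measure Ω} [IsProbabilityMeasure μ]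
    (mZ : MeasurableSpace Ω) (hmZ : mZ ≤ mΩ)
    (Y X hhat fhat : Ω → ℝ)
    (hY : MemLp Y 2 μ) (hX : MemLp X 2 μ)
    (hhm : StronglyMeasurable[mZ] hhat) (hfm : StronglyMeasurable[mZ] fhat)
    (hh2 : MemLp hhat 2 μ) (hf2 : MemLp fhat 2 μ) :
    ∫ ω, (Y ω - hhat ω) * (X ω - fhat ω) ∂μ
        - ∫ ω, (Y ω - (μ[Y|mZ]) ω) * (X ω - (μ[X|mZ]) ω) ∂μ
      = ∫ ω, ((μ[Y|mZ]) ω - hhat ω) * ((μ[X|mZ]) ω - fhat ω) ∂μ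
    ∧ |∫ ω, ((μ[Y|mZ]) ω - hhat ω) * ((μ[X|mZ]) ω - fhat ω) ∂μ|
      ≤ Real.sqrt (∫ ω, ((μ[Y|mZ]) ω - hhat ω) ^ 2 ∂μ)
        * Real.sqrt (∫ ω, ((μ[X|mZ]) ω - fhat ω) ^ 2 ∂μ) := by
  refine ⟨sub_eq_of_eq_add' ?_, abs_integral_mul_le_sqrt_integral_sq_mul
    ((hY.condExp one_le_two).sub hh2) ((hX.condExp one_le_two).sub hf2)⟩
  exact integral_sub_mul_sub_eq_integral_condExp_add hmZ hY hX hhm hfm hh2 hf2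
end
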